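/- For every integer n ≥ 2, Σ_{k=0}^{n-2} (n-k)²·(n-k-1)·(n+k-2)!/(k!·2^k) = (n-1)!·2^(n-1)·(−1 + (2n-1)!!/(2^(n-2)·(n-1)!)) = 2·(2n-1)!! − (2n-2)!!. -/

import Mathlib

/-! Write `n = m + 2` and `w k = (m + k)! / (k! 2^k) = m! C(m + k, k) / 2^k`, so that
`(k + 1) w (k + 1) = (m + k + 1) / 2 · w k`. Summation by parts then telescopes
`∑ k ≤ m, ((m + k + 1) / 2 · q (k + 1) - k q k) w k` for any `q`, and the cubic
`(m + 2 - k)² (m + 1 - k)` is of this form with `q k = 2 ((m + 1 - k)² + 4m + 6)`, up to the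
constant `-2 (m + 1)`. The boundary term is `2 (2m + 3)‼`. What is left is the classical
`∑ k ≤ m, C(m + k, k) / 2^k = 2^m`, i.e. `∑ k ≤ m, w k = m! 2^m`, which follows by induction on
`m` from Pascal's rule; it contributes `2 (m + 1) m! 2^m = (2m + 2)‼`. -/

/-- Plane binary trees with ℕ-labeled leaves. -/
inductive BTree : Type
  | leaf : ℕ → BTree
  | node : BTree → BTree → BTree

namespace BTree

/-- Multiset of leaf labels. -/
def leaves : BTree → Multiset ℕ
  | leaf i => {i}
  | node l r => leaves l + leaves r

/-- Depth of the leaf labeled `i` (junk if `i` is not a leaf label). -/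
def dep : BTree → ℕ → ℕ
  | leaf _, _ => 0
  | node l r, i => if i ∈ leaves l then dep l i + 1 else dep r i + 1

/-- Path length (number of edges) between the leaves labeled `i` and `j`. -/
def dist : BTree → ℕ → ℕ → ℕ
  | leaf _, _, _ => 0
  | node l r, i, j =>
    if i ∈ leaves l ∧ j ∈ leaves l then dist l i j
    else if i ∈ leaves r ∧ j ∈ leaves r then dist r i j
    else (if i ∈ leaves l then dep l i + 1 else dep r i + 1)
       + (if j ∈ leaves l then dep l j + 1 else dep r j + 1)

/-- Isomorphism of leaf-labeled binary trees: generated by swapping the two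
children of any node, preserving leaf labels. -/
inductive Iso : BTree → BTree → Prop
  | leaf (i : ℕ) : Iso (leaf i) (leaf i)
  | node {l r l' r'} : Iso l l' → Iso r r' → Iso (node l r) (node l' r')
  | swap {l r l' r'} : Iso l r' → Iso r l' → Iso (node l r) (node l' r')

end BTree

/-- A valid fully resolved rooted phylogenetic tree on the leaf set {1,…,n}:
the multiset of leaf labels is exactly {1,…,n} (each label occurring once). -/
def BTree.valid (n : ℕ) (t : BTree) : Prop := t.leaves = (Finset.Icc 1 n).val

/-- The type of fully resolved rooted phylogenetic trees on {1,…,n}, up to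
label-preserving isomorphism. -/
def PhyloTree (n : ℕ) : Type :=
  Quot (fun a b : {t : BTree // t.valid n} => BTree.Iso a.1 b.1)

/-- The path length between leaves `i` and `j` of a phylogenetic tree,
computed on a representative. -/
noncomputable def pdist {n : ℕ} (T : PhyloTree n) (i j : ℕ) : ℕ :=
  BTree.dist T.out.1 i j

/-- Double factorial: `df n = n‼`. -/
def df : ℕ → ℕ
  | 0 => 1
  | 1 => 1
  | n + 2 => (n + 2) * df n

/-- Rising factorial (Pochhammer symbol) `(a)_k = a(a+1)⋯(a+k-1)`. -/
def rf (a : ℝ) : ℕ → ℝ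
  | 0 => 1
  | k + 1 => rf a k * (a + k)

open Finset Nat

noncomputable def binomWeight (m k : ℕ) : ℝ := (m + k)! / (k ! * 2 ^ k)

lemma binomWeight_zero_right (m : ℕ) : binomWeight m 0 = m ! := by simp [binomWeight]

lemma succ_mul_binomWeight_succ (m k : ℕ) :
    (k + 1) * binomWeight m (k + 1) = (m + k + 1) / 2 * binomWeight m k := by
  simp only [binomWeight, ← add_assoc, factorial_succ, pow_succ]
  push_cast
  field_simp

lemma binomWeight_succ_succ (m k : ℕ) :
    binomWeight (m + 1) (k + 1) = (m + 1) * binomWeight m (k + 1) + binomWeight (m + 1) k / 2 := by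
  simp only [binomWeight, show m + 1 + (k + 1) = m + k + 1 + 1 by ring,
    show m + 1 + k = m + k + 1 by ring, show m + (k + 1) = m + k + 1 by ring, factorial_succ,
    pow_succ]
  push_cast
  field_simp
  ring

lemma binomWeight_succ_self (m : ℕ) :
    binomWeight (m + 1) (m + 1) = 2 * (m + 1) * binomWeight m (m + 1) := by
  simp only [binomWeight, show m + 1 + (m + 1) = m + (m + 1) + 1 by ring,
    factorial_succ (m + (m + 1))]
  push_cast
  field_simp
  ring

theorem sum_range_binomWeight (m : ℕ) :
    ∑ k ∈ range (m + 1), binomWeight m k = m ! * 2 ^ m := by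
  induction m with
  | zero => simp [binomWeight]
  | succ m ih =>
    have hshift := sum_range_succ' (binomWeight m) m
    have hsplit := sum_range_succ' (binomWeight (m + 1)) (m + 1)
    simp only [binomWeight_succ_succ, sum_add_distrib, ← mul_sum, ← sum_div] at hsplit
    rw [sum_range_succ (binomWeight (m + 1)), sum_range_succ (fun k => binomWeight m (k + 1)),
      binomWeight_zero_right, binomWeight_succ_self, factorial_succ] at hsplit
    rw [binomWeight_zero_right, ih] at hshift
    rw [sum_range_succ, binomWeight_succ_self, factorial_succ, pow_succ]
    push_cast at hsplit ⊢
    linear_combination 2 * hsplit - 2 * (m + 1) * hshift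

theorem sum_range_mul_binomWeight_telescope (m N : ℕ) (q : ℕ → ℝ) :
    ∑ k ∈ range N, ((m + k + 1) / 2 * q (k + 1) - k * q k) * binomWeight m k
      = N * q N * binomWeight m N := by
  induction N with
  | zero => simp
  | succ N ih =>
    rw [sum_range_succ, ih]
    push_cast
    linear_combination -q (N + 1) * succ_mul_binomWeight_succ m N

theorem sum_range_cubic_mul_binomWeight (m : ℕ) :
    ∑ k ∈ range (m + 1), ((m + 2 - k) ^ 2 * (m + 1 - k) : ℝ) * binomWeight m k
      = 2 * (2 * m + 3)‼ - (2 * m + 2)‼ := by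
  set q : ℕ → ℝ := fun k => 2 * ((m + 1 - k) ^ 2 + 4 * (m + 1) + 2)
  have hsummand : ∀ k : ℕ, ((m + 2 - k) ^ 2 * (m + 1 - k) : ℝ) * binomWeight m k
      = ((m + k + 1) / 2 * q (k + 1) - k * q k) * binomWeight m k
        - 2 * (m + 1) * binomWeight m k := by
    intro k
    simp only [q]
    push_cast
    ring
  rw [sum_congr rfl fun k _ => hsummand k, sum_sub_distrib, sum_range_mul_binomWeight_telescope,
    ← mul_sum, sum_range_binomWeight]
  have hodd : ((2 * m + 3)‼ : ℝ) * (2 ^ m * m !) = (2 * m + 3) * (2 * m + 1)! := by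
    rw [doubleFactorial_add_two, factorial_eq_mul_doubleFactorial, doubleFactorial_two_mul]
    push_cast
    ring
  rw [show 2 * m + 2 = 2 * (m + 1) by ring, doubleFactorial_two_mul]
  simp only [binomWeight, q, show m + (m + 1) = 2 * m + 1 by ring, factorial_succ m]
  push_cast
  field_simp
  linear_combination -4 * hodd

theorem df_eq_doubleFactorial : ∀ n : ℕ, df n = n‼
  | 0 => rfl
  | 1 => rfl
  | n + 2 => by rw [df, doubleFactorial_add_two, df_eq_doubleFactorial n]

/-- Σ_{k=0}^{n-2} (n-k)²(n-k-1)(n+k-2)!/(k!·2^k)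
  = (n-1)!·2^(n-1)·(−1 + (2n-1)‼/(2^(n-2)(n-1)!)) = 2·(2n-1)‼ − (2n-2)‼. -/
theorem stmt18 (n : ℕ) (hn : 2 ≤ n) :
    (∑ k ∈ Finset.range (n - 1),
        ((n - k : ℕ) : ℝ) ^ 2 * ((n - k - 1 : ℕ) : ℝ) *
          (Nat.factorial (n + k - 2) : ℝ) /
          ((Nat.factorial k : ℝ) * 2 ^ k)
      = (Nat.factorial (n - 1) : ℝ) * 2 ^ (n - 1) *
          (-1 + (df (2 * n - 1) : ℝ) /
            (2 ^ (n - 2) * (Nat.factorial (n - 1) : ℝ)))) ∧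
    (∑ k ∈ Finset.range (n - 1),
        ((n - k : ℕ) : ℝ) ^ 2 * ((n - k - 1 : ℕ) : ℝ) *
          (Nat.factorial (n + k - 2) : ℝ) /
          ((Nat.factorial k : ℝ) * 2 ^ k)
      = 2 * (df (2 * n - 1) : ℝ) - (df (2 * n - 2) : ℝ)) := by
  obtain ⟨m, rfl⟩ : ∃ m, n = m + 2 := ⟨n - 2, by omega⟩
  have hsum : ∑ k ∈ range (m + 1),
        ((m + 2 - k : ℕ) : ℝ) ^ 2 * ((m + 2 - k - 1 : ℕ) : ℝ) *
          ((m + 2 + k - 2)! : ℝ) / ((k ! : ℝ) * 2 ^ k)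
      = 2 * ((2 * m + 3)‼ : ℝ) - (2 * m + 2)‼ := by
    rw [← sum_range_cubic_mul_binomWeight]
    refine sum_congr rfl fun k hk => ?_
    have hkm : k ≤ m := Nat.lt_succ_iff.mp (mem_range.mp hk)
    rw [show m + 2 + k - 2 = m + k by omega, Nat.sub_sub, Nat.cast_sub (by omega : k ≤ m + 2),
      Nat.cast_sub (by omega : k + 1 ≤ m + 2), binomWeight]
    push_cast
    ring
  simp only [show m + 2 - 1 = m + 1 by omega, show m + 2 - 2 = m by omega,
    show 2 * (m + 2) - 1 = 2 * m + 3 by omega, show 2 * (m + 2) - 2 = 2 * m + 2 by omega,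
    df_eq_doubleFactorial, hsum, and_true]
  rw [show 2 * m + 2 = 2 * (m + 1) by ring, doubleFactorial_two_mul, factorial_succ]
  push_cast
  field_simp
  ring
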